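/- Let f, h ∈ ℝ^N satisfy ‖f + h‖₁ ≤ ‖f‖₁, and let T_0 ⊆ [N] be any index set with |T_0| = K. Then ‖h_{T_0^c}‖₁ ≤ 2‖f_{T_0^c}‖₁ + ‖h_{T_0}‖₁ ≤ 2‖f_{T_0^c}‖₁ + √K·‖h_{T_0}‖₂. -/

import Mathlib

open Finset

noncomputable def l1norm {n : ℕ} (x : Fin n → ℝ) : ℝ := ∑ i, |x i|

noncomputable def l2norm {n : ℕ} (x : Fin n → ℝ) : ℝ := Real.sqrt (∑ i, x i ^ 2)

def restr {n : ℕ} (x : Fin n → ℝ) (S : Finset (Fin n)) : Fin n → ℝ :=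
  fun i => if i ∈ S then x i else 0

section

variable {n : ℕ}

lemma l1norm_restr (x : Fin n → ℝ) (S : Finset (Fin n)) :
    l1norm (restr x S) = ∑ i ∈ S, |x i| := by
  simp only [l1norm, restr, apply_ite abs, abs_zero, sum_ite_mem, univ_inter]

lemma l2norm_restr (x : Fin n → ℝ) (S : Finset (Fin n)) :
    l2norm (restr x S) = √(∑ i ∈ S, x i ^ 2) := by
  simp [l2norm, restr, apply_ite (· ^ 2), sum_ite_mem]

lemma l1norm_eq_restr_add_restr_compl (x : Fin n → ℝ) (S : Finset (Fin n)) :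
    l1norm x = l1norm (restr x S) + l1norm (restr x Sᶜ) := by
  rw [l1norm_restr, l1norm_restr, l1norm, sum_add_sum_compl]

lemma l1norm_restr_sub_l1norm_restr_le (x y : Fin n → ℝ) (S : Finset (Fin n)) :
    l1norm (restr x S) - l1norm (restr y S) ≤ l1norm (restr (x + y) S) := by
  simp only [l1norm_restr, ← sum_sub_distrib, Pi.add_apply]
  gcongr with i
  simpa using abs_sub_abs_le_abs_sub (x i) (-y i)

theorem l1norm_restr_compl_le_of_l1norm_add_le {f h : Fin n → ℝ}
    (hfh : l1norm (f + h) ≤ l1norm f) (S : Finset (Fin n)) :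
    l1norm (restr h Sᶜ) ≤ 2 * l1norm (restr f Sᶜ) + l1norm (restr h S) := by
  have hf := l1norm_eq_restr_add_restr_compl f S
  have hfh_split := l1norm_eq_restr_add_restr_compl (f + h) S
  have hS := l1norm_restr_sub_l1norm_restr_le f h S
  have hSc := l1norm_restr_sub_l1norm_restr_le h f Sᶜ
  rw [add_comm h f] at hSc
  linarith

theorem l1norm_restr_le_sqrt_card_mul_l2norm_restr (x : Fin n → ℝ) (S : Finset (Fin n)) :
    l1norm (restr x S) ≤ √(#S : ℝ) * l2norm (restr x S) := by
  rw [l1norm_restr, l2norm_restr]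
  simpa using Real.sum_mul_le_sqrt_mul_sqrt S (fun _ ↦ 1) (fun i ↦ |x i|)

end

/-- **Cone condition.** If `‖f + h‖₁ ≤ ‖f‖₁` and `T₀` has cardinality `K`, then
`‖h_{T₀ᶜ}‖₁ ≤ 2 ‖f_{T₀ᶜ}‖₁ + ‖h_{T₀}‖₁ ≤ 2 ‖f_{T₀ᶜ}‖₁ + √K ‖h_{T₀}‖₂`. -/
theorem cone_condition
    {N : ℕ} (f h : Fin N → ℝ)
    (hfh : l1norm (fun i => f i + h i) ≤ l1norm f)
    (K : ℕ) (T₀ : Finset (Fin N)) (hT₀ : T₀.card = K) :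
    l1norm (restr h T₀ᶜ) ≤ 2 * l1norm (restr f T₀ᶜ) + l1norm (restr h T₀)
    ∧ 2 * l1norm (restr f T₀ᶜ) + l1norm (restr h T₀)
        ≤ 2 * l1norm (restr f T₀ᶜ) + Real.sqrt (K : ℝ) * l2norm (restr h T₀) := by
  refine ⟨l1norm_restr_compl_le_of_l1norm_add_le hfh T₀, ?_⟩
  subst hT₀
  gcongr
  exact l1norm_restr_le_sqrt_card_mul_l2norm_restr h T₀
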